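/- arXiv:2005.11541 — 9 statements merged into one kernel-verified Lean document; each statement's English description precedes it below -/
import Mathlib

section
/- Let d1 < d2 < ... < dl be positive integers with d1 ≥ 2 and gcd(d1,...,dl) = 1. Then every integer x > (d1 - 1)(dl - 1) can be written as x = Σ αi·di for some non-negative integers αi. -/
open Finset

/-- Bezout's identity for the gcd of a finite family of naturals, over `ℤ`. -/
lemma finset_gcd_bezout {ι : Type*} [DecidableEq ι] (s : Finset ι) (f : ι → ℕ) :
    ∃ z : ι → ℤ, ((s.gcd f : ℕ) : ℤ) = ∑ i ∈ s, z i * (f i : ℤ) := by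
  classical
  refine Finset.induction_on s ⟨0, by simp⟩ ?_
  rintro a s ha ⟨z, hz⟩
  refine ⟨fun i => if i = a then Nat.gcdA (f a) (s.gcd f) else Nat.gcdB (f a) (s.gcd f) * z i, ?_⟩
  rw [Finset.gcd_insert, Finset.sum_insert ha]
  have hb : ((Nat.gcd (f a) (s.gcd f) : ℕ) : ℤ)
      = f a * Nat.gcdA (f a) (s.gcd f) + (s.gcd f) * Nat.gcdB (f a) (s.gcd f) :=
    Nat.gcd_eq_gcd_ab _ _
  have h1 : GCDMonoid.gcd (f a) (s.gcd f) = Nat.gcd (f a) (s.gcd f) := rfl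
  rw [h1, hb]
  simp only [if_pos rfl]
  rw [Finset.sum_congr rfl (fun i hi => by rw [if_neg (by rintro rfl; exact ha hi)]), hz]
  rw [Finset.sum_mul]
  congr 1
  · simp [mul_comm]
  · exact Finset.sum_congr rfl fun i _ => by ring

lemma shrink_aux (n : ℕ) {α : Type*} (g : α → ℕ) (L : List α) (i j : ℕ)
    (hij : i < j) (hj : j ≤ L.length)
    (hval : (((L.take i).map g).sum) % n = (((L.take j).map g).sum) % n) :
    ∃ L'' : List α, L''.length < L.length ∧ (L''.map g).sum % n = ((L.map g).sum) % n := by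
  refine ⟨L.take i ++ L.drop j, ?_, ?_⟩
  · simp only [List.length_append, List.length_take, List.length_drop]
    omega
  · have key : ∀ k : ℕ, (L.map g).sum = ((L.take k).map g).sum + ((L.drop k).map g).sum := by
      intro k
      rw [← List.sum_append, ← List.map_append, List.take_append_drop]
    have h2 : ((L.take i ++ L.drop j).map g).sum
        = ((L.take i).map g).sum + ((L.drop j).map g).sum := by
      rw [List.map_append, List.sum_append]
    rw [h2, key j]
    exact Nat.ModEq.add_right _ hval

/-- Pigeonhole shrinking: any list can be replaced by one of length `< n`
with the same sum of values modulo `n`. -/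
lemma shrink_list (n : ℕ) (hn : 1 ≤ n) {α : Type*} (g : α → ℕ) (L : List α) :
    ∃ L' : List α, L'.length ≤ n - 1 ∧ (L'.map g).sum % n = ((L.map g).sum) % n := by
  by_cases h : L.length ≤ n - 1
  · exact ⟨L, h, rfl⟩
  · haveI : NeZero n := ⟨by omega⟩
    have hcard : Fintype.card (ZMod n) < Fintype.card (Fin (L.length + 1)) := by
      simp [ZMod.card]; omega
    obtain ⟨i, j, hne, hval⟩ := Fintype.exists_ne_map_eq_of_card_lt
      (fun k : Fin (L.length + 1) => ((((L.take (k : ℕ)).map g).sum : ℕ) : ZMod n)) hcard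
    have hmod : (((L.take (i : ℕ)).map g).sum) % n = (((L.take (j : ℕ)).map g).sum) % n :=
      (ZMod.natCast_eq_natCast_iff _ _ _).mp hval
    have hne' : (i : ℕ) ≠ (j : ℕ) := fun e => hne (Fin.ext e)
    have hobtain : ∃ L'' : List α, L''.length < L.length
        ∧ (L''.map g).sum % n = ((L.map g).sum) % n := by
      rcases Nat.lt_or_ge (i : ℕ) (j : ℕ) with hij | hij
      · exact shrink_aux n g L i j hij (by omega) hmod
      · exact shrink_aux n g L j i (by omega) (by omega) hmod.symm
    obtain ⟨L'', hlen, hsum⟩ := hobtain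
    obtain ⟨L', h1, h2⟩ := shrink_list n hn g L''
    exact ⟨L', h1, h2.trans hsum⟩
termination_by L.length
decreasing_by exact hlen

lemma list_sum_count {m : ℕ} (d : Fin m → ℕ) (L : List (Fin m)) :
    (L.map d).sum = ∑ i, L.count i * d i := by
  induction L with
  | nil => simp
  | cons a L ih =>
    simp only [List.map_cons, List.sum_cons, ih, List.count_cons, beq_iff_eq, add_mul,
      Finset.sum_add_distrib, ite_mul, one_mul, zero_mul, Finset.sum_ite_eq, Finset.sum_ite_eq',
      Finset.mem_univ, if_pos]
    omega

lemma exists_list_of_comb {m : ℕ} (c d : Fin m → ℕ) :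
    ∃ L : List (Fin m), (L.map d).sum = ∑ i, c i * d i := by
  refine ⟨(List.ofFn fun i => List.replicate (c i) i).flatten, ?_⟩
  rw [List.map_flatten, List.map_ofFn, List.sum_flatten, List.map_ofFn]
  simp [Function.comp, List.sum_replicate, smul_eq_mul, List.sum_ofFn]

lemma exists_comb (l : ℕ) (d : Fin (l + 1) → ℕ) (h2 : 2 ≤ d 0)
    (hgcd : Finset.univ.gcd d = 1) (x : ℕ) :
    ∃ c : Fin (l + 1) → ℕ, (∑ i, c i * d i) % d 0 = x % d 0 := by
  obtain ⟨z, hz⟩ := finset_gcd_bezout Finset.univ d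
  rw [hgcd] at hz
  set n := d 0 with hn
  haveI : NeZero n := ⟨by omega⟩
  refine ⟨fun i => ((x : ℤ) * (z i % n)).toNat, ?_⟩
  refine (ZMod.natCast_eq_natCast_iff _ _ _).mp ?_
  have hc : ∀ i : Fin (l + 1), ((((x : ℤ) * (z i % n)).toNat : ℤ)) = (x : ℤ) * (z i % n) :=
    fun i => Int.toNat_of_nonneg (mul_nonneg (by positivity)
      (Int.emod_nonneg _ (by exact_mod_cast (by omega : n ≠ 0))))
  have key : ∀ i : Fin (l + 1), ((((x : ℤ) * (z i % n)).toNat : ℕ) : ZMod n)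
      = (x : ZMod n) * ((z i : ℤ) : ZMod n) := by
    intro i
    calc ((((x : ℤ) * (z i % n)).toNat : ℕ) : ZMod n)
        = (((((x : ℤ) * (z i % n)).toNat : ℕ) : ℤ) : ZMod n) := (Int.cast_natCast _).symm
      _ = ((((x : ℤ) * (z i % n)) : ℤ) : ZMod n) := by rw [hc i]
      _ = (x : ZMod n) * (((z i % (n : ℤ)) : ℤ) : ZMod n) := by push_cast; ring
      _ = (x : ZMod n) * ((z i : ℤ) : ZMod n) := by rw [ZMod.intCast_mod]
  push_cast
  simp only [key]
  have hz' : ((1 : ℤ) : ZMod n) = ((∑ i, z i * (d i : ℤ) : ℤ) : ZMod n) := by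
    exact_mod_cast congrArg (fun t : ℤ => (t : ZMod n)) hz
  push_cast at hz'
  calc ∑ i, (x : ZMod n) * ((z i : ℤ) : ZMod n) * (d i : ZMod n)
      = (x : ZMod n) * ∑ i, ((z i : ℤ) : ZMod n) * (d i : ZMod n) := by
        rw [Finset.mul_sum]; exact Finset.sum_congr rfl fun i _ => by ring
    _ = (x : ZMod n) * 1 := by rw [← hz']
    _ = (x : ZMod n) := by ring

/-- Schur's bound for the Frobenius coin problem: if `d 0 < d 1 < ... < d l` are
positive integers with `d 0 ≥ 2` and gcd 1, every integer `x > (d 0 - 1)(d l - 1)`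
is a non-negative integer combination of the `d i`. -/
theorem schur_frobenius_bound (l : ℕ) (d : Fin (l + 1) → ℕ)
    (hmono : StrictMono d) (h2 : 2 ≤ d 0)
    (hgcd : Finset.univ.gcd d = 1)
    (x : ℕ) (hx : (d 0 - 1) * (d (Fin.last l) - 1) < x) :
    ∃ α : Fin (l + 1) → ℕ, x = ∑ i, α i * d i := by
  classical
  obtain ⟨c, hc⟩ := exists_comb l d h2 hgcd x
  obtain ⟨L0, hL0⟩ := exists_list_of_comb c d
  obtain ⟨L', hlen, hsum⟩ := shrink_list (d 0) (by omega) d L0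
  rw [hL0, hc] at hsum
  set m : ℕ := (L'.map d).sum with hm
  have hdl : d 0 ≤ d (Fin.last l) := hmono.monotone (Fin.le_last 0)
  -- bound each value by d (Fin.last l)
  have hbound : m ≤ (d 0 - 1) * d (Fin.last l) := by
    have h1 : (L'.map d).sum ≤ (L'.map d).length * d (Fin.last l) := by
      apply List.sum_le_card_nsmul
      intro y hy
      obtain ⟨i, _, rfl⟩ := List.mem_map.mp hy
      exact hmono.monotone (Fin.le_last i)
    rw [List.length_map] at h1
    exact h1.trans (Nat.mul_le_mul_right _ hlen)
  -- x ≥ m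
  have hxm : m ≤ x := by
    by_contra hlt
    push_neg at hlt
    have hdvd : d 0 ∣ m - x := (Nat.modEq_iff_dvd' hlt.le).mp hsum.symm
    have hge : d 0 ≤ m - x := Nat.le_of_dvd (by omega) hdvd
    have h3 : x + d 0 ≤ m := by omega
    have h4 : m ≤ (d 0 - 1) * (d (Fin.last l) - 1) + (d 0 - 1) := by
      have hd : d (Fin.last l) = (d (Fin.last l) - 1) + 1 := by omega
      calc m ≤ (d 0 - 1) * d (Fin.last l) := hbound
        _ = (d 0 - 1) * (d (Fin.last l) - 1) + (d 0 - 1) := by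
            conv_lhs => rw [hd]
            rw [Nat.mul_succ]
    have h5 : (d 0 - 1) * (d (Fin.last l) - 1) < x := hx
    have he : d 0 - 1 + 1 = d 0 := by omega
    linarith
  -- write x = m + k * d 0
  have hdvd : d 0 ∣ x - m := (Nat.modEq_iff_dvd' hxm).mp hsum
  obtain ⟨k, hk⟩ := hdvd
  refine ⟨fun i => L'.count i + if i = 0 then k else 0, ?_⟩
  have hsplit : ∑ i, (L'.count i + if i = 0 then k else 0) * d i
      = (∑ i, L'.count i * d i) + ∑ i, (if i = 0 then k else 0) * d i := by
    rw [← Finset.sum_add_distrib]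
    exact Finset.sum_congr rfl fun i _ => by ring
  rw [hsplit, ← list_sum_count]
  have : ∑ i, (if i = (0 : Fin (l + 1)) then k else 0) * d i = k * d 0 := by
    simp [ite_mul]
  rw [this, ← hm, mul_comm k (d 0)]
  omega
end

section
/- Let G be a Frobenius instance with parameter k, with layer weights w1,...,wl. Then G has a closed set of weight exactly k if and only if gcd(w1,...,wl) divides k. -/
/-!
Only sufficiency needs work. Write `g i` for the gcd of the weights of the layers below `i` and
`B = ⌊√k⌋`, a bound on the weight of every descendant set. Adding to a closed set the descendant
set of a fresh vertex of layer `i` adds `w i` plus a multiple of `g i`, and at most `B` in total.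
Going down the layers, at layer `i` we add `a ≤ g i - g (i + 1)` such sets, with `a` chosen so
that the remaining target becomes divisible by `g i`. These amounts telescope, so everything
spent above the bottom layer is at most `B * w 0 ≤ B² ≤ k`; the remainder is a multiple of `w 0`
and is filled with bottom-layer vertices, which are sinks. Since every layer has at least `k`
vertices and every closed set of weight `< k` has fewer than `k` vertices, a fresh vertex is
always available.
-/

open Finset

theorem Nat.exists_le_sub_gcd_mul_modEq {w g r : ℕ} (hg : 0 < g) (hr : Nat.gcd w g ∣ r) :
    ∃ a ≤ g - Nat.gcd w g, a * w ≡ r [MOD g] := by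
  set d := Nat.gcd w g
  have hd : 0 < d := Nat.gcd_pos_of_pos_right w hg
  have hdg : d * (g / d) = g := Nat.mul_div_cancel' (Nat.gcd_dvd_right w g)
  obtain ⟨r', rfl⟩ := hr
  obtain ⟨a, ha, hmod⟩ := Nat.exists_mul_mod_eq_of_coprime r' (Nat.coprime_div_gcd_div_gcd hd)
    (Nat.div_pos (Nat.le_of_dvd hg (Nat.gcd_dvd_right w g)) hd).ne'
  refine ⟨a, ?_, ?_⟩
  · have : d * a + d ≤ g := hdg ▸ Nat.mul_le_mul_left d ha
    have : a ≤ d * a := Nat.le_mul_of_pos_left a hd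
    omega
  · have := (show w / d * a ≡ r' [MOD g / d] from hmod).mul_left' d
    rwa [← mul_assoc, Nat.mul_div_cancel' (Nat.gcd_dvd_left w g), hdg, mul_comm w] at this

namespace Frobenius

variable {l : ℕ}

def prefixGcd (w : Fin l → ℕ) (i : ℕ) : ℕ :=
  (univ.filter fun j : Fin l => (j : ℕ) < i).gcd w

variable (w : Fin l → ℕ)

theorem prefixGcd_dvd {i : ℕ} {j : Fin l} (hj : (j : ℕ) < i) : prefixGcd w i ∣ w j :=
  Finset.gcd_dvd (by simpa using hj)

theorem prefixGcd_zero : prefixGcd w 0 = 0 := by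
  simp [prefixGcd]

theorem prefixGcd_one (hl : 0 < l) : prefixGcd w 1 = w ⟨0, hl⟩ := by
  have : (univ.filter fun j : Fin l => (j : ℕ) < 1) = {⟨0, hl⟩} := by
    ext j; simp [Fin.ext_iff]
  rw [prefixGcd, this, gcd_singleton, normalize_eq]

theorem prefixGcd_succ {i : ℕ} (hi : i < l) :
    prefixGcd w (i + 1) = Nat.gcd (w ⟨i, hi⟩) (prefixGcd w i) := by
  have : (univ.filter fun j : Fin l => (j : ℕ) < i + 1) =
      insert ⟨i, hi⟩ (univ.filter fun j : Fin l => (j : ℕ) < i) := by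
    ext j; simp [Fin.ext_iff]; omega
  rw [prefixGcd, this, gcd_insert]
  rfl

theorem prefixGcd_self : prefixGcd w l = univ.gcd w := by
  simp [prefixGcd]

variable {V : Type*} {E : V → V → Prop} {layer : V → Fin l}

def weight (layer : V → Fin l) (S : Finset V) : ℕ := ∑ v ∈ S, w (layer v)

def IsEdgeClosed (E : V → V → Prop) (S : Finset V) : Prop := ∀ u ∈ S, ∀ v, E u v → v ∈ S

def descendants [Fintype V] (E : V → V → Prop) [DecidableRel (Relation.ReflTransGen E)]
    (v : V) : Finset V :=
  univ.filter (Relation.ReflTransGen E v)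

variable {w}

theorem IsEdgeClosed.union [DecidableEq V] {S T : Finset V} (hS : IsEdgeClosed E S)
    (hT : IsEdgeClosed E T) : IsEdgeClosed E (S ∪ T) := by
  intro u hu v huv
  rcases mem_union.mp hu with h | h
  · exact mem_union_left _ (hS u h v huv)
  · exact mem_union_right _ (hT u h v huv)

theorem layer_lt_of_transGen (hedge : ∀ u v, E u v → layer v < layer u) {u v : V}
    (h : Relation.TransGen E v u) : layer u < layer v := by
  induction h with
  | single e => exact hedge _ _ e
  | tail _ e ih => exact (hedge _ _ e).trans ih

section descendants

variable [Fintype V] [DecidableRel (Relation.ReflTransGen E)]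

theorem mem_descendants {u v : V} : u ∈ descendants E v ↔ Relation.ReflTransGen E v u := by
  simp [descendants]

theorem mem_descendants_self (v : V) : v ∈ descendants E v :=
  mem_descendants.mpr Relation.ReflTransGen.refl

theorem isEdgeClosed_descendants (v : V) : IsEdgeClosed E (descendants E v) :=
  fun _ hu _ hux => mem_descendants.mpr ((mem_descendants.mp hu).tail hux)

theorem layer_lt_of_mem_descendants (hedge : ∀ u v, E u v → layer v < layer u) {u v : V}
    (hu : u ∈ descendants E v) (hne : u ≠ v) : layer u < layer v :=
  layer_lt_of_transGen hedge <|
    (Relation.reflTransGen_iff_eq_or_transGen.mp (mem_descendants.mp hu)).resolve_left hne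

theorem descendants_eq_singleton_of_layer_eq_zero (hedge : ∀ u v, E u v → layer v < layer u)
    {v : V} (hv : (layer v : ℕ) = 0) : descendants E v = {v} := by
  ext u
  refine ⟨fun hu => mem_singleton.mpr (by_contra fun hne => ?_), fun hu => ?_⟩
  · have := layer_lt_of_mem_descendants hedge hu hne
    omega
  · rw [mem_singleton.mp hu]
    exact mem_descendants_self v

end descendants

theorem card_le_weight (hw : ∀ i, 1 ≤ w i) (S : Finset V) : S.card ≤ weight w layer S := by
  rw [weight, card_eq_sum_ones]
  exact sum_le_sum fun v _ => hw (layer v)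

theorem exists_notMem_of_card_lt [Fintype V] {k : ℕ}
    (hsize : ∀ i, k ≤ (univ.filter fun v => layer v = i).card) {S : Finset V} (hS : S.card < k)
    (j : Fin l) : ∃ v, layer v = j ∧ v ∉ S := by
  by_contra! h
  have : (univ.filter fun v => layer v = j) ⊆ S := fun v hv => h v (by simpa using hv)
  exact absurd ((hsize j).trans (card_le_card this)) hS.not_ge

section extension

variable [Fintype V] [DecidableEq V] [DecidableRel (Relation.ReflTransGen E)] {k B : ℕ}

theorem exists_extend_by_descendants (hedge : ∀ u v, E u v → layer v < layer u)
    (hsize : ∀ i, k ≤ (univ.filter fun v => layer v = i).card)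
    {j : Fin l} (hB : ∀ v, layer v = j → weight w layer (descendants E v) ≤ B)
    {T : Finset V} (hT : IsEdgeClosed E T) (hTk : T.card < k) :
    ∃ T' c, IsEdgeClosed E T' ∧ weight w layer T' = weight w layer T + w j + c ∧
      w j + c ≤ B ∧ prefixGcd w j ∣ c := by
  obtain ⟨v, rfl, hvT⟩ := exists_notMem_of_card_lt hsize hTk j
  set N := descendants E v \ T
  have hvN : v ∈ N := mem_sdiff.mpr ⟨mem_descendants_self v, hvT⟩
  have hN : weight w layer N = w (layer v) + weight w layer (N.erase v) :=
    (add_sum_erase N _ hvN).symm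
  refine ⟨T ∪ descendants E v, weight w layer (N.erase v), hT.union (isEdgeClosed_descendants v),
    ?_, ?_, ?_⟩
  · rw [add_assoc, ← hN, weight, weight, weight, ← union_sdiff_self_eq_union,
      sum_union disjoint_sdiff]
  · rw [← hN]
    exact (sum_le_sum_of_subset sdiff_subset).trans (hB v rfl)
  · refine dvd_sum fun u hu => prefixGcd_dvd w ?_
    obtain ⟨hne, hu⟩ := mem_erase.mp hu
    exact layer_lt_of_mem_descendants hedge (mem_sdiff.mp hu).1 hne

theorem exists_extend_by_layer (hw : ∀ i, 1 ≤ w i) (hedge : ∀ u v, E u v → layer v < layer u)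
    (hsize : ∀ i, k ≤ (univ.filter fun v => layer v = i).card)
    {j : Fin l} (hB : ∀ v, layer v = j → weight w layer (descendants E v) ≤ B) (hB0 : 0 < B)
    (a : ℕ) {S : Finset V} (hS : IsEdgeClosed E S) (hSk : weight w layer S + a * B ≤ k) :
    ∃ T c, IsEdgeClosed E T ∧ weight w layer T = weight w layer S + a * w j + c ∧
      a * w j + c ≤ a * B ∧ prefixGcd w j ∣ c := by
  induction a with
  | zero => exact ⟨S, 0, hS, by simp, by simp, dvd_zero _⟩
  | succ a ih =>
    obtain ⟨T, c, hT, hwT, hc, hdvd⟩ := ih (by nlinarith)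
    have hTk : T.card < k := by nlinarith [card_le_weight (layer := layer) hw T]
    obtain ⟨T', c', hT', hwT', hc', hdvd'⟩ := exists_extend_by_descendants hedge hsize hB hT hTk
    exact ⟨T', c + c', hT', by rw [hwT', hwT]; ring, by nlinarith, dvd_add hdvd hdvd'⟩

theorem exists_isEdgeClosed_weight_add (hw : ∀ i, 1 ≤ w i)
    (hedge : ∀ u v, E u v → layer v < layer u)
    (hsize : ∀ i, k ≤ (univ.filter fun v => layer v = i).card)
    (hB : ∀ v, weight w layer (descendants E v) ≤ B) (hB0 : 0 < B) (hl : 0 < l) (i : ℕ)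
    (hi : i < l) (r : ℕ) {S : Finset V} (hS : IsEdgeClosed E S) (hr : prefixGcd w (i + 1) ∣ r)
    (hrB : B * (w ⟨0, hl⟩ - prefixGcd w (i + 1)) ≤ r) (hSk : weight w layer S + r ≤ k) :
    ∃ T, IsEdgeClosed E T ∧ weight w layer T = weight w layer S + r := by
  induction i generalizing r S with
  | zero =>
    rw [prefixGcd_one w hl] at hr
    obtain ⟨m, rfl⟩ := hr
    have hbot : ∀ v, layer v = ⟨0, hl⟩ → weight w layer (descendants E v) ≤ w ⟨0, hl⟩ := by
      intro v hv
      rw [descendants_eq_singleton_of_layer_eq_zero hedge (by simp [hv]), weight, sum_singleton,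
        hv]
    obtain ⟨T, c, hT, hwT, -, hc⟩ := exists_extend_by_layer hw hedge hsize hbot (hw _) m hS
      (by rwa [mul_comm])
    have hc0 : c = 0 := Nat.eq_zero_of_zero_dvd (by simpa [prefixGcd_zero] using hc)
    rw [hc0] at hwT
    exact ⟨T, hT, by rw [hwT]; ring⟩
  | succ i ih =>
    rw [prefixGcd_succ w hi] at hr hrB
    set g := prefixGcd w (i + 1)
    have hg0 : g ∣ w ⟨0, hl⟩ := prefixGcd_dvd w (Nat.succ_pos i)
    have hg : 0 < g := Nat.pos_of_dvd_of_pos hg0 (hw _)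
    obtain ⟨a, ha, hmod⟩ := Nat.exists_le_sub_gcd_mul_modEq hg hr
    set g' := Nat.gcd (w ⟨i + 1, hi⟩) g
    have hgw : g ≤ w ⟨0, hl⟩ := Nat.le_of_dvd (hw _) hg0
    have hg'g : g' ≤ g := Nat.le_of_dvd hg (Nat.gcd_dvd_right _ _)
    have hsplit : B * (w ⟨0, hl⟩ - g') = B * (w ⟨0, hl⟩ - g) + B * (g - g') := by
      rw [← mul_add]; congr 1; omega
    have haB : a * B ≤ B * (g - g') := by
      rw [mul_comm]; exact Nat.mul_le_mul_left B ha
    obtain ⟨T, c, hT, hwT, hc, hdvd⟩ :=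
      exists_extend_by_layer (j := ⟨i + 1, hi⟩) hw hedge hsize (fun v _ => hB v) hB0 a hS
        (by omega)
    have hr' : g ∣ r - (a * w ⟨i + 1, hi⟩ + c) :=
      (Nat.modEq_iff_dvd' (by omega)).mp (hmod.add (Nat.modEq_zero_iff_dvd.mpr hdvd))
    obtain ⟨T', hT', hwT'⟩ := ih (by omega) _ hT hr' (by omega) (by omega)
    exact ⟨T', hT', by omega⟩

end extension

end Frobenius

/-- Criterion for Frobenius instances: a Frobenius instance with parameter `k`
(layered weighted DAG with layer weights `w i ≥ 1`, edges going to strictly lower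
layers, each layer of size at least `k`, and every descendant set of total weight
at most `√(k/2)`) has a closed set of weight exactly `k` iff `gcd(w 1, ..., w l) ∣ k`. -/
theorem frobenius_instance_criterion {V : Type*} [Fintype V] [DecidableEq V]
    (E : V → V → Prop) [DecidableRel (Relation.ReflTransGen E)]
    (l k : ℕ) (layer : V → Fin l) (w : Fin l → ℕ)
    (hw : ∀ i, 1 ≤ w i)
    (hedge : ∀ u v, E u v → layer v < layer u)
    (hsize : ∀ i : Fin l, k ≤ (Finset.univ.filter (fun v => layer v = i)).card)
    (hdesc : ∀ v : V,
      ((∑ u ∈ Finset.univ.filter (fun u => Relation.ReflTransGen E v u),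
          w (layer u) : ℕ) : ℝ) ≤ Real.sqrt ((k : ℝ) / 2)) :
    (∃ S : Finset V, (∀ u ∈ S, ∀ v, E u v → v ∈ S) ∧ ∑ v ∈ S, w (layer v) = k) ↔
      Finset.univ.gcd w ∣ k := by
  refine ⟨fun ⟨S, _, hS⟩ => hS ▸ dvd_sum fun v _ => gcd_dvd (mem_univ (layer v)), fun hk => ?_⟩
  obtain rfl | hk0 := Nat.eq_zero_or_pos k
  · exact ⟨∅, by simp, by simp⟩
  have hl : 0 < l := Nat.pos_of_ne_zero fun h => by subst h; simp at hk; omega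
  have hB : ∀ v, Frobenius.weight w layer (Frobenius.descendants E v) ≤ Nat.sqrt k := fun v =>
    Real.nat_floor_real_sqrt_eq_nat_sqrt ▸
      Nat.le_floor ((hdesc v).trans (Real.sqrt_le_sqrt (half_le_self (Nat.cast_nonneg k))))
  obtain ⟨v₀, hv₀, -⟩ := Frobenius.exists_notMem_of_card_lt hsize (S := ∅) hk0 ⟨0, hl⟩
  have hw₀ : w ⟨0, hl⟩ ≤ Nat.sqrt k := hv₀ ▸
    (single_le_sum (fun _ _ => Nat.zero_le _) (Frobenius.mem_descendants_self v₀)).trans (hB v₀)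
  obtain ⟨T, hT, hwT⟩ := Frobenius.exists_isEdgeClosed_weight_add hw hedge hsize hB
    (Nat.sqrt_pos.mpr hk0) hl (l - 1) (by omega) k (S := ∅) (by simp [Frobenius.IsEdgeClosed])
    (by rwa [Nat.sub_add_cancel hl, Frobenius.prefixGcd_self])
    ((Nat.mul_le_mul_left _ ((Nat.sub_le _ _).trans hw₀)).trans (Nat.sqrt_le k))
    (by simp [Frobenius.weight])
  exact ⟨T, hT, by simpa [Frobenius.weight] using hwT⟩
end

section
/- Let G = (V,E) be an undirected graph and k ≥ 2. Define the weighted DAG G' whose vertices are a node v_u of weight K := C(k,2)+1 for each u ∈ V and a node v_e of weight 1 for each e ∈ E, with edges (v_{u,w}, v_u) and (v_{u,w}, v_w) for each edge {u,w} ∈ E. Then G' has a closed set of total weight k·K + C(k,2) if and only if G contains a clique of size k. -/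
open Finset

lemma card_offDiag_sym2 {α : Type*} [DecidableEq α] (s : Finset α) :
    (s.sym2.filter fun z => ¬ z.IsDiag).card = s.card.choose 2 := by
  have h1 : (s.sym2.filter fun z => Sym2.IsDiag z) = s.image Sym2.diag := by
    ext z
    induction z using Sym2.inductionOn with
    | hf x y =>
      simp only [mem_filter, Finset.mk_mem_sym2_iff, mem_image, Sym2.isDiag_iff_proj_eq]
      constructor
      · rintro ⟨⟨hx, hy⟩, rfl⟩; exact ⟨x, hx, rfl⟩
      · rintro ⟨a, ha, h⟩
        have hx : x = a ∧ y = a := by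
          have := Sym2.eq_iff.mp h.symm
          tauto
        obtain ⟨rfl, rfl⟩ := hx
        exact ⟨⟨ha, ha⟩, rfl⟩
  have h2 : (s.sym2.filter fun z => Sym2.IsDiag z).card = s.card := by
    rw [h1, Finset.card_image_of_injective _ Sym2.diag_injective]
  have h3 := Finset.card_filter_add_card_filter_not
    (s := s.sym2) (p := fun z => Sym2.IsDiag z)
  rw [h2, Finset.card_sym2] at h3
  have h4 : (s.card + 1).choose 2 = s.card + s.card.choose 2 := by
    rw [Nat.choose_succ_succ]; simp [Nat.choose_one_right, Nat.add_comm]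
  omega

/-- The clique-to-closed-set reduction: with `K = C(k,2)+1`, the weighted DAG built
from an undirected graph `G` (vertex nodes of weight `K`, edge nodes of weight `1`
pointing to their endpoints) has a closed set of total weight `k·K + C(k,2)` iff
`G` has a `k`-clique. A closed set is described by its vertex-node part `XV` and
edge-node part `XE ⊆ E(G)` such that every edge node's endpoints lie in `XV`. -/
theorem clique_reduction_correct {V : Type*} [Fintype V] [DecidableEq V]
    (G : SimpleGraph V) [DecidableRel G.Adj] (k K : ℕ) (hk : 2 ≤ k)
    (hK : K = k.choose 2 + 1) :
    (∃ (XV : Finset V) (XE : Finset (Sym2 V)), XE ⊆ G.edgeFinset ∧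
        (∀ e ∈ XE, ∀ u, u ∈ e → u ∈ XV) ∧
        XV.card * K + XE.card = k * K + k.choose 2) ↔
      ∃ C : Finset V, G.IsNClique k C := by
  constructor
  · rintro ⟨XV, XE, hsub, hclosed, hw⟩
    set D := XV.sym2.filter (fun z => ¬ z.IsDiag) with hD
    have hXED : XE ⊆ D := by
      intro e he
      rw [hD, mem_filter, Finset.mem_sym2_iff]
      refine ⟨fun a ha => hclosed e he a ha, ?_⟩
      have := SimpleGraph.not_isDiag_of_mem_edgeSet G
        (by simpa [SimpleGraph.mem_edgeFinset] using hsub he)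
      exact this
    have hDcard : D.card = XV.card.choose 2 := card_offDiag_sym2 XV
    have hXEle : XE.card ≤ XV.card.choose 2 := hDcard ▸ Finset.card_le_card hXED
    -- force XV.card = k
    have hcardV : XV.card = k := by
      by_contra hne
      rcases lt_or_gt_of_ne hne with h | h
      · -- XV.card ≤ k - 1
        have h1 : XV.card.choose 2 ≤ k.choose 2 :=
          Nat.choose_le_choose 2 (Nat.le_of_lt h)
        have h2 : XV.card * K + XE.card < k * K := by
          have : XV.card * K ≤ (k - 1) * K := Nat.mul_le_mul_right K (by omega)
          have h3 : XE.card ≤ k.choose 2 := le_trans hXEle h1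
          have hkK : (k - 1) * K + K = k * K := by
            have : k - 1 + 1 = k := by omega
            calc (k-1)*K + K = ((k-1)+1)*K := by ring
              _ = k * K := by rw [this]
          omega
        omega
      · have : (k + 1) * K ≤ XV.card * K := Nat.mul_le_mul_right K (by omega)
        have : k * K + K ≤ XV.card * K := by nlinarith
        omega
    have hXEcard : XE.card = k.choose 2 := by rw [hcardV] at hw; omega
    have hXE_eq : XE = D := by
      apply Finset.eq_of_subset_of_card_le hXED
      rw [hDcard, hcardV, hXEcard]
    refine ⟨XV, ?_, hcardV⟩
    intro u hu v hv huv
    have : s(u, v) ∈ D := by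
      rw [hD, mem_filter, Finset.mk_mem_sym2_iff]
      exact ⟨⟨hu, hv⟩, by simp [huv]⟩
    rw [← hXE_eq] at this
    have := hsub this
    rwa [SimpleGraph.mem_edgeFinset, SimpleGraph.mem_edgeSet] at this
  · rintro ⟨C, hC⟩
    refine ⟨C, C.sym2.filter (fun z => ¬ z.IsDiag), ?_, ?_, ?_⟩
    · intro e he
      rw [mem_filter] at he
      obtain ⟨he1, he2⟩ := he
      induction e using Sym2.inductionOn with
      | hf x y =>
        rw [Finset.mk_mem_sym2_iff] at he1
        rw [SimpleGraph.mem_edgeFinset, SimpleGraph.mem_edgeSet]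
        exact hC.1 he1.1 he1.2 (by simpa using he2)
    · intro e he u hu
      rw [mem_filter, Finset.mem_sym2_iff] at he
      exact he.1 u hu
    · rw [card_offDiag_sym2, hC.2]
end

section
/- Let X be a closed set in the graph G' (as constructed from an undirected graph G with k ≥ 2, vertex nodes of weight K = C(k,2)+1 and edge nodes of weight 1) with total weight exactly k·K + C(k,2). Then X contains exactly k vertex nodes and exactly C(k,2) edge nodes. -/
open Finset

lemma card_filter_not_isDiag {α : Type*} [DecidableEq α] (s : Finset α) :
    (s.sym2.filter (fun e => ¬ e.IsDiag)).card = s.card.choose 2 := by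
  have h1 : s.sym2.filter (fun e => e.IsDiag) = s.image (fun a => s(a, a)) := by
    ext e
    induction e using Sym2.ind with
    | _ x y =>
      simp only [mem_filter, Finset.mk_mem_sym2_iff, Sym2.isDiag_iff_proj_eq, mem_image]
      constructor
      · rintro ⟨⟨hx, _⟩, h⟩; exact ⟨x, hx, by simp [h]⟩
      · rintro ⟨a, ha, h⟩
        rw [Sym2.eq_iff] at h
        rcases h with ⟨h1, h2⟩ | ⟨h1, h2⟩ <;> subst h1 <;> subst h2 <;> simp [ha]
  have h2 : (s.sym2.filter (fun e => e.IsDiag)).card = s.card := by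
    rw [h1]
    apply card_image_of_injective
    intro a b h
    simpa [Sym2.eq_iff] using h
  have h3 := Finset.card_filter_add_card_filter_not (s := s.sym2)
    (p := fun e => e.IsDiag)
  rw [Finset.card_sym2, h2] at h3
  have h4 : (s.card + 1).choose 2 = s.card.choose 1 + s.card.choose 2 :=
    Nat.choose_succ_succ _ _
  rw [Nat.choose_one_right] at h4
  omega


/-- In the clique-to-closed-set reduction with `K = C(k,2)+1`, any closed set of
total weight exactly `k·K + C(k,2)` contains exactly `k` vertex nodes and exactly
`C(k,2)` edge nodes. -/
theorem clique_reduction_counting {V : Type*} [Fintype V] [DecidableEq V]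
    (G : SimpleGraph V) [DecidableRel G.Adj] (k K : ℕ) (hk : 2 ≤ k)
    (hK : K = k.choose 2 + 1)
    (XV : Finset V) (XE : Finset (Sym2 V)) (hXE : XE ⊆ G.edgeFinset)
    (hclosed : ∀ e ∈ XE, ∀ u, u ∈ e → u ∈ XV)
    (hweight : XV.card * K + XE.card = k * K + k.choose 2) :
    XV.card = k ∧ XE.card = k.choose 2 := by
  have hsub : XE ⊆ XV.sym2.filter (fun e => ¬ e.IsDiag) := by
    intro e he
    rw [mem_filter, mem_sym2_iff]
    refine ⟨fun a ha => hclosed e he a ha, ?_⟩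
    have := hXE he
    rw [SimpleGraph.mem_edgeFinset] at this
    exact SimpleGraph.not_isDiag_of_mem_edgeSet _ this
  have hle : XE.card ≤ XV.card.choose 2 := by
    calc XE.card ≤ _ := card_le_card hsub
    _ = XV.card.choose 2 := card_filter_not_isDiag XV
  -- now arithmetic
  set n := XV.card
  have hnk : n = k := by
    rcases lt_trichotomy n k with h | h | h
    · exfalso
      have hmono : n.choose 2 ≤ (k-1).choose 2 := Nat.choose_le_choose 2 (by omega)
      have h2 : (k-1).choose 2 ≤ k.choose 2 := Nat.choose_le_choose 2 (by omega)
      have : n * K ≤ (k-1) * K := Nat.mul_le_mul_right _ (by omega)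
      have hkK : (k-1) * K + K = k * K := by
        have h5 : (k-1) * K + K = (k-1+1) * K := (Nat.succ_mul _ _).symm
        have h6 : k - 1 + 1 = k := by omega
        rw [h6] at h5; omega
      omega
    · exact h
    · exfalso
      have : (k+1) * K ≤ n * K := Nat.mul_le_mul_right _ (by omega)
      have : k * K + K ≤ n * K := by nlinarith
      omega
  constructor
  · exact hnk
  · rw [hnk] at hweight; omega
end

section
/- Let f : {0,1}^r → {0,1} be 0-valid (f(0,...,0) = 1) and suppose f does not contain IMPL as a 0-restriction. Then for all S ⊆ T ⊆ [r], if f(a_S) = 1 and f(a_T) = 1 then f(a_{T∖S}) = 1. -/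
/-- The assignment `a_S` setting exactly the coordinates in `S` to `1`. -/
def indic {r : ℕ} (S : Finset (Fin r)) : Fin r → Bool := fun i => decide (i ∈ S)

/-- `f` contains `IMPL` as a 0-restriction: there are disjoint `X, Y ⊆ [r]`
(all other coordinates fixed to 0) realizing the truth table of `y₁ ⇒ y₂`. -/
def ContainsIMPL0 {r : ℕ} (f : (Fin r → Bool) → Bool) : Prop :=
  ∃ X Y : Finset (Fin r), Disjoint X Y ∧
    f (indic ∅) = true ∧ f (indic Y) = true ∧
    f (indic (X ∪ Y)) = true ∧ f (indic X) = false

/-- If `f` is 0-valid and does not contain IMPL as a 0-restriction, then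
satisfaction is closed under set difference of nested satisfying sets. -/
theorem sdiff_satisfying {r : ℕ} (f : (Fin r → Bool) → Bool)
    (h0 : f (indic ∅) = true) (hno : ¬ ContainsIMPL0 f)
    (S T : Finset (Fin r)) (hST : S ⊆ T)
    (hS : f (indic S) = true) (hT : f (indic T) = true) :
    f (indic (T \ S)) = true := by
  by_contra h
  exact hno ⟨T \ S, S, Finset.sdiff_disjoint, h0, hS,
    by rwa [Finset.sdiff_union_of_subset hST], Bool.not_eq_true _ ▸ h⟩
end

section
/- Let f : {0,1}^r → {0,1} be 0-valid and suppose f contains IMPL as a restriction. Then f contains IMPL already as a 0-restriction. -/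
/-- `f` contains `IMPL` as a restriction: there are pairwise disjoint
`X, Y, Z₁ ⊆ [r]` (the rest fixed to 0, `Z₁` fixed to 1) realizing `y₁ ⇒ y₂`. -/
def ContainsIMPL {r : ℕ} (f : (Fin r → Bool) → Bool) : Prop :=
  ∃ X Y Z1 : Finset (Fin r), Disjoint X Y ∧ Disjoint X Z1 ∧ Disjoint Y Z1 ∧
    f (indic Z1) = true ∧ f (indic (Y ∪ Z1)) = true ∧
    f (indic (X ∪ Y ∪ Z1)) = true ∧ f (indic (X ∪ Z1)) = false

/-- A 0-valid function containing IMPL as a restriction already contains IMPL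
as a 0-restriction. -/
theorem impl_as_zero_restriction {r : ℕ} (f : (Fin r → Bool) → Bool)
    (h0 : f (indic ∅) = true) (h : ContainsIMPL f) : ContainsIMPL0 f := by
  obtain ⟨X, Y, Z1, hXY, hXZ, hYZ, h1, h2, h3, h4⟩ := h
  cases hY : f (indic Y) with
  | false =>
      exact ⟨Y, Z1, hYZ, h0, h1, h2, hY⟩
  | true =>
      refine ⟨X ∪ Z1, Y, ?_, h0, hY, ?_, h4⟩
      · exact Finset.disjoint_union_left.mpr ⟨hXY, hYZ.symm⟩
      · have : X ∪ Z1 ∪ Y = X ∪ Y ∪ Z1 := by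
          ext i; simp [Finset.mem_union]; tauto
        rw [this]; exact h3
end

section
/- Let f : {0,1}^r → {0,1} be 0-valid, suppose f contains NAND_d as a restriction (for some d ≥ 2), and suppose f does not contain IMPL as a 0-restriction. Then f contains NAND_d already as a 0-restriction. -/
/-- `f` contains `NAND_d` as a restriction: there are pairwise disjoint blocks
`X 0, ..., X (d-1)` and a set `Z₁` (disjoint from all blocks; remaining
coordinates fixed to 0, `Z₁` fixed to 1) such that plugging the same bit into
each block realizes `¬(y₁ ∧ ... ∧ y_d)`. -/
def ContainsNAND {r : ℕ} (d : ℕ) (f : (Fin r → Bool) → Bool) : Prop :=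
  ∃ (X : Fin d → Finset (Fin r)) (Z1 : Finset (Fin r)),
    (∀ i j, i ≠ j → Disjoint (X i) (X j)) ∧ (∀ i, Disjoint (X i) Z1) ∧
    ∀ I : Finset (Fin d),
      f (indic (I.biUnion X ∪ Z1)) = !decide (I = Finset.univ)

/-- `f` contains `NAND_d` as a 0-restriction (i.e. with `Z₁ = ∅`). -/
def ContainsNAND0 {r : ℕ} (d : ℕ) (f : (Fin r → Bool) → Bool) : Prop :=
  ∃ X : Fin d → Finset (Fin r),
    (∀ i j, i ≠ j → Disjoint (X i) (X j)) ∧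
    ∀ I : Finset (Fin d),
      f (indic (I.biUnion X)) = !decide (I = Finset.univ)

/-- A 0-valid function containing `NAND_d` as a restriction but not containing
IMPL as a 0-restriction already contains `NAND_d` as a 0-restriction. -/
theorem nand_as_zero_restriction {r : ℕ} (d : ℕ) (hd : 2 ≤ d)
    (f : (Fin r → Bool) → Bool) (h0 : f (indic ∅) = true)
    (hnand : ContainsNAND d f) (hno : ¬ ContainsIMPL0 f) :
    ContainsNAND0 d f := by
  obtain ⟨X, Z1, hXX, hXZ, hval⟩ := hnand
  have hd1 : 0 < d := by omega
  set i0 : Fin d := ⟨0, hd1⟩ with hi0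
  have hne : (∅ : Finset (Fin d)) ≠ Finset.univ := by
    intro h
    have := Finset.mem_univ i0
    rw [← h] at this
    exact absurd this (Finset.notMem_empty i0)
  have key : ∀ I : Finset (Fin d), I ≠ Finset.univ →
      f (indic (I.biUnion X)) = true := by
    intro I hI
    by_contra hc
    apply hno
    refine ⟨I.biUnion X, Z1, ?_, h0, ?_, ?_, ?_⟩
    · exact Finset.disjoint_biUnion_left _ _ _ |>.mpr fun i _ => hXZ i
    · have := hval ∅
      simpa [hne] using this
    · simpa [hI] using hval I
    · simpa using hc
  refine ⟨fun i => if i = i0 then X i ∪ Z1 else X i, ?_, ?_⟩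
  · intro i j hij
    dsimp only
    rcases eq_or_ne i i0 with hi | hi
    · subst hi
      rw [if_pos rfl, if_neg (Ne.symm hij)]
      exact Finset.disjoint_union_left.mpr ⟨hXX _ _ hij, (hXZ j).symm⟩
    · rcases eq_or_ne j i0 with hj | hj
      · subst hj
        rw [if_neg hi, if_pos rfl]
        exact Finset.disjoint_union_right.mpr ⟨hXX _ _ hij, hXZ i⟩
      · rw [if_neg hi, if_neg hj]
        exact hXX _ _ hij
  · intro I
    by_cases hmem : i0 ∈ I
    · have hset : (I.biUnion fun i => if i = i0 then X i ∪ Z1 else X i)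
          = I.biUnion X ∪ Z1 := by
        ext a
        simp only [Finset.mem_biUnion, Finset.mem_union]
        constructor
        · rintro ⟨i, hi, ha⟩
          by_cases h : i = i0
          · rcases (by simpa [h] using ha : a ∈ X i ∨ a ∈ Z1) with h' | h'
            · exact Or.inl ⟨i, hi, h'⟩
            · exact Or.inr h'
          · exact Or.inl ⟨i, hi, by simpa [h] using ha⟩
        · rintro (⟨i, hi, ha⟩ | ha)
          · refine ⟨i, hi, ?_⟩
            by_cases h : i = i0
            · rw [if_pos h]
              exact Finset.mem_union_left _ ha
            · simpa [h] using ha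
          · exact ⟨i0, hmem, by simp [ha]⟩
      rw [hset]
      exact hval I
    · have hIne : I ≠ Finset.univ := fun h => hmem (h ▸ Finset.mem_univ i0)
      have hset : (I.biUnion fun i => if i = i0 then X i ∪ Z1 else X i)
          = I.biUnion X := by
        apply Finset.biUnion_congr rfl
        intro i hi
        have : i ≠ i0 := fun h => hmem (h ▸ hi)
        simp [this]
      rw [hset, key I hIne]
      simp [hIne]
end

section
/- Let d ≥ 1 and let f : {0,1}^r → {0,1} be a Boolean function that does not contain NAND_{d+1} as a restriction. If an assignment a ∈ {0,1}^r violates f (i.e., f(a) = 0), then there is an assignment a' ≤ a (coordinatewise) of Hamming weight at most d with f(a') = 0. -/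
/-- If `f` avoids `NAND_{d+1}` as a restriction then every violated assignment
is witnessed by a dominated violating assignment of weight at most `d`. -/
theorem violating_subassignment {r : ℕ} (d : ℕ) (hd : 1 ≤ d)
    (f : (Fin r → Bool) → Bool) (hno : ¬ ContainsNAND (d + 1) f)
    (a : Fin r → Bool) (ha : f a = false) :
    ∃ a' : Fin r → Bool, (∀ i, a' i = true → a i = true) ∧
      (Finset.univ.filter (fun i => a' i = true)).card ≤ d ∧ f a' = false := by
  have key : ∀ n (T : Finset (Fin r)), T.card ≤ n → f (indic T) = false →
      ∃ T', T' ⊆ T ∧ T'.card ≤ d ∧ f (indic T') = false := by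
    intro n
    induction n with
    | zero =>
      intro T hT hf
      exact ⟨T, Finset.Subset.refl T, by omega, hf⟩
    | succ n ih =>
      intro T hT hf
      by_cases hcard : T.card ≤ d
      · exact ⟨T, Finset.Subset.refl T, hcard, hf⟩
      by_cases hmin : ∃ T', T' ⊂ T ∧ f (indic T') = false
      · obtain ⟨T', hss, hf'⟩ := hmin
        have hle : T'.card ≤ n := by
          have := Finset.card_lt_card hss
          have := Finset.card_le_card hss.subset
          omega
        obtain ⟨T'', h1, h2, h3⟩ := ih T' hle hf'
        exact ⟨T'', h1.trans hss.subset, h2, h3⟩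
      · exfalso
        push_neg at hmin
        have hmin' : ∀ T', T' ⊂ T → f (indic T') = true := by
          intro T' h
          cases h' : f (indic T') with
          | false => exact absurd h' (hmin T' h)
          | true => rfl
        obtain ⟨U, hUT, hUcard⟩ := Finset.exists_subset_card_eq (show d + 1 ≤ T.card by omega)
        set e := U.orderIsoOfFin hUcard with he
        apply hno
        refine ⟨fun i => {(e i : Fin r)}, T \ U, ?_, ?_, ?_⟩
        · intro i j hij
          simp only [Finset.disjoint_singleton]
          intro h
          exact hij (e.injective (Subtype.ext h))
        · intro i
          simp only [Finset.disjoint_singleton_left, Finset.mem_sdiff, not_and, not_not]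
          intro _
          exact (e i).2
        · intro I
          by_cases hI : I = Finset.univ
          · subst hI
            have hU : Finset.univ.biUnion
                (fun i => ({(e i : Fin r)} : Finset (Fin r))) = U := by
              ext x
              simp only [Finset.mem_biUnion, Finset.mem_univ, true_and,
                Finset.mem_singleton]
              constructor
              · rintro ⟨i, rfl⟩; exact (e i).2
              · intro hx; exact ⟨e.symm ⟨x, hx⟩, by simp⟩
            rw [hU, Finset.union_sdiff_of_subset hUT]
            simp [hf]
          · have hW : (I.biUnion (fun i => ({(e i : Fin r)} : Finset (Fin r)))
                ∪ (T \ U)) ⊂ T := by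
              constructor
              · intro x hx
                simp only [Finset.mem_union, Finset.mem_biUnion,
                  Finset.mem_singleton, Finset.mem_sdiff] at hx
                rcases hx with ⟨i, _, rfl⟩ | ⟨h, _⟩
                · exact hUT (e i).2
                · exact h
              · intro hsub
                obtain ⟨j, hj⟩ : ∃ j, j ∉ I := by
                  by_contra h
                  push_neg at h
                  exact hI (Finset.eq_univ_iff_forall.mpr h)
                have hjT : (e j : Fin r) ∈ T := hUT (e j).2
                have hmem := hsub hjT
                simp only [Finset.mem_union, Finset.mem_biUnion,
                  Finset.mem_singleton, Finset.mem_sdiff] at hmem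
                rcases hmem with ⟨i, hi, hij⟩ | ⟨_, hnotU⟩
                · exact hj (e.injective (Subtype.ext hij) ▸ hi)
                · exact hnotU (e j).2
            rw [hmin' _ hW]
            simp [hI]
  set S := Finset.univ.filter (fun i => a i = true) with hS
  have haS : indic S = a := by
    funext i
    simp only [indic, hS, Finset.mem_filter, Finset.mem_univ, true_and]
    cases a i <;> simp
  obtain ⟨T', hsub, hcard, hf⟩ := key S.card S le_rfl (by rw [haS]; exact ha)
  refine ⟨indic T', ?_, ?_, hf⟩
  · intro i hi
    have hiT : i ∈ T' := by simpa [indic] using hi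
    have := hsub hiT
    simpa [hS] using this
  · have hfil : Finset.univ.filter (fun i => indic T' i = true) = T' := by
      ext i
      simp [indic]
    rw [hfil]
    exact hcard
end

section
/- Let G = (V,E) be a finite DAG with a topological ordering v1,...,vn, and let P be a property of subsets of V (intended: the corresponding assignment satisfies a formula φ) such that: (i) P(∅) holds; (ii) P(D(v)) holds for every v ∈ V, where D(v) is the set of descendants of v including v; (iii) P is closed under unions of closed sets in the following sense: whenever A, B are closed sets with P(A), P(B), and P(A ∩ B), then P(A ∪ B). Then P(S) holds for every closed set S ⊆ V. -/
/-- A set `S` is closed if every edge leaving `S` stays in `S`. -/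
def IsClosed' {V : Type*} (E : V → V → Prop) (S : Set V) : Prop :=
  ∀ u v, E u v → u ∈ S → v ∈ S

/-!
In a nonempty closed set `S` pick a vertex `v` that is minimal for reachability inside `S`:
every `u ∈ S` reaching `v` is reachable from `v`. Then `S = (S \ ancestors v) ∪ D(v)`, both
parts are closed, and the first part and its intersection with `D(v)` are proper closed subsets
of `S`, so well-founded induction on `S` concludes.
-/

section

open Relation Set

variable {V : Type*} {E : V → V → Prop}

def descendants (E : V → V → Prop) (v : V) : Set V := {u | ReflTransGen E v u}

def ancestors (E : V → V → Prop) (v : V) : Set V := {u | ReflTransGen E u v}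

lemma self_mem_ancestors (v : V) : v ∈ ancestors E v := ReflTransGen.refl

lemma ancestors_subset_of_mem {u v : V} (h : u ∈ ancestors E v) :
    ancestors E u ⊆ ancestors E v :=
  fun _ hw => ReflTransGen.trans hw h

lemma exists_mem_forall_ancestors_mem_descendants [Finite V] {S : Set V} (hS : S.Nonempty) :
    ∃ v ∈ S, ∀ u ∈ S, u ∈ ancestors E v → u ∈ descendants E v := by
  -- a vertex of `S` with fewest ancestors
  obtain ⟨v, hvS, hmin⟩ := S.exists_min_image (fun v => (ancestors E v).ncard) S.toFinite hS
  refine ⟨v, hvS, fun u huS huv => ?_⟩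
  have hsub := ancestors_subset_of_mem huv
  have heq : ancestors E u = ancestors E v :=
    eq_of_subset_of_ncard_le hsub (hmin u huS) (toFinite _)
  exact (heq ▸ self_mem_ancestors v : v ∈ ancestors E u)

namespace IsClosed'

lemma inter {A B : Set V} (hA : IsClosed' E A) (hB : IsClosed' E B) : IsClosed' E (A ∩ B) :=
  fun u v huv hu => ⟨hA u v huv hu.1, hB u v huv hu.2⟩

lemma descendants (v : V) : IsClosed' E (descendants E v) :=
  fun _ _ huw hu => ReflTransGen.tail hu huw

lemma descendants_subset {S : Set V} (hS : IsClosed' E S) {v : V} (hv : v ∈ S) :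
    _root_.descendants E v ⊆ S := by
  intro u hu
  induction hu with
  | refl => exact hv
  | tail _ hwu hw => exact hS _ _ hwu hw

lemma diff_ancestors {S : Set V} (hS : IsClosed' E S) (v : V) :
    IsClosed' E (S \ ancestors E v) :=
  fun u w huw hu => ⟨hS u w huw hu.1, fun hw => hu.2 (ReflTransGen.head huw hw)⟩

lemma diff_ancestors_union_descendants {S : Set V} (hS : IsClosed' E S) {v : V} (hv : v ∈ S)
    (hmin : ∀ u ∈ S, u ∈ ancestors E v → u ∈ _root_.descendants E v) :
    S \ ancestors E v ∪ _root_.descendants E v = S := by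
  refine Subset.antisymm (union_subset sdiff_subset (hS.descendants_subset hv)) fun u hu => ?_
  by_cases hanc : u ∈ ancestors E v
  · exact Or.inr (hmin u hu hanc)
  · exact Or.inl ⟨hu, hanc⟩

end IsClosed'

end

theorem closed_sets_induction_general {V : Type*} [Fintype V] (E : V → V → Prop)
    (P : Set V → Prop)
    (hempty : P ∅)
    (hD : ∀ v : V, P {u | Relation.ReflTransGen E v u})
    (hunion : ∀ A B : Set V, IsClosed' E A → IsClosed' E B →
      P A → P B → P (A ∩ B) → P (A ∪ B)) :
    ∀ S : Set V, IsClosed' E S → P S := by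
  intro S
  induction S using WellFoundedLT.induction with
  | _ S ih =>
  intro hS
  rcases S.eq_empty_or_nonempty with rfl | hne
  · exact hempty
  obtain ⟨v, hvS, hmin⟩ := exists_mem_forall_ancestors_mem_descendants (E := E) hne
  have hA := hS.diff_ancestors v
  have hAS : S \ ancestors E v ⊂ S :=
    Set.sdiff_ssubset_left_iff.mpr ⟨v, hvS, self_mem_ancestors v⟩
  rw [← hS.diff_ancestors_union_descendants hvS hmin]
  have hDv := IsClosed'.descendants (E := E) v
  exact hunion _ _ hA hDv (ih _ hAS hA) (hD v)
    (ih _ (ssubset_of_subset_of_ssubset Set.inter_subset_left hAS) (hA.inter hDv))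

/-- Abstract induction over a finite DAG: if a property `P` of vertex sets holds
for the empty set and for every descendant set `D(v)`, and is closed under unions
of closed sets (given `P` for both sets and their intersection), then `P` holds
for every closed set. -/
theorem closed_sets_induction {V : Type*} [Fintype V] (E : V → V → Prop)
    (rank : V → ℕ) (htopo : ∀ u v, E u v → rank u < rank v)
    (P : Set V → Prop)
    (hempty : P ∅)
    (hD : ∀ v : V, P {u | Relation.ReflTransGen E v u})
    (hunion : ∀ A B : Set V, IsClosed' E A → IsClosed' E B →
      P A → P B → P (A ∩ B) → P (A ∪ B)) :
    ∀ S : Set V, IsClosed' E S → P S :=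
  closed_sets_induction_general E P hempty hD hunion
end
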